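/- arXiv:2508.19690 — 3 statements merged into one kernel-verified Lean document; each statement's English description precedes it below -/
import Mathlib

section
/- Let Q on Fin 2 be given by the parametrization Q_{11}^{12}=Q_{11}^{21}=a, Q_{12}^{11}=Q_{21}^{11}=b, Q_{12}^{12}=Q_{21}^{21}=c, Q_{12}^{21}=Q_{21}^{12}=d, Q_{11}^{22}=f, Q_{22}^{11}=y, Q_{12}^{22}=Q_{21}^{22}=−a, Q_{22}^{21}=Q_{22}^{12}=−b, Q_{11}^{11}=Q_{22}^{22}=1−d, where a,b,c,d,f,y satisfy the pentagon system. Then the invariant of the lens space L(3,1), given by Σ_{i,j,k,t} Q_{ij}^{kt} Q_{kt}^{ji} = 8ab + 6d² − 4d + 2fy + 2, equals 2. -/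
open BigOperators

/-- The parametrized structure constants `Q_{ij}^{st}` of the 2-dimensional
3-algebra ansatz (indices `0,1` correspond to `1,2` in the paper). -/
def Qpar (a b c d f y : ℂ) (i j s t : Fin 2) : ℂ :=
  match i.1, j.1, s.1, t.1 with
  | 0, 0, 0, 0 => 1 - d
  | 0, 0, 0, 1 => a
  | 0, 0, 1, 0 => a
  | 0, 0, 1, 1 => f
  | 0, 1, 0, 0 => b
  | 0, 1, 0, 1 => c
  | 0, 1, 1, 0 => d
  | 0, 1, 1, 1 => -a
  | 1, 0, 0, 0 => b
  | 1, 0, 0, 1 => d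
  | 1, 0, 1, 0 => c
  | 1, 0, 1, 1 => -a
  | 1, 1, 0, 0 => y
  | 1, 1, 0, 1 => -b
  | 1, 1, 1, 0 => -b
  | _, _, _, _ => 1 - d

def lensL31Invariant {R ι : Type*} [CommSemiring R] [Fintype ι] (Q : ι → ι → ι → ι → R) : R :=
  ∑ i, ∑ j, ∑ k, ∑ t, Q i j k t * Q k t j i

theorem lensL31Invariant_Qpar (a b c d f y : ℂ) :
    lensL31Invariant (Qpar a b c d f y) =
      8 * a * b + 4 * c * d + 2 * d ^ 2 - 4 * d + 2 * f * y + 2 := by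
  simp only [lensL31Invariant, Fin.sum_univ_two, Qpar, Fin.val_zero, Fin.val_one]
  ring

theorem lens_space_L31_invariant_general
    (a b c d f y : ℂ)
    (h4 : d * (c - d) = 0)
    (h9 : d ^ 2 - f * y = 0)
    (h10 : 2 * a * b + 2 * d ^ 2 - d = 0) :
    (∑ i : Fin 2, ∑ j : Fin 2, ∑ k : Fin 2, ∑ t : Fin 2,
        Qpar a b c d f y i j k t * Qpar a b c d f y k t j i) =
      8 * a * b + 6 * d ^ 2 - 4 * d + 2 * f * y + 2 ∧
    (∑ i : Fin 2, ∑ j : Fin 2, ∑ k : Fin 2, ∑ t : Fin 2,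
        Qpar a b c d f y i j k t * Qpar a b c d f y k t j i) = 2 := by
  have hformula : lensL31Invariant (Qpar a b c d f y) =
      8 * a * b + 6 * d ^ 2 - 4 * d + 2 * f * y + 2 := by
    rw [lensL31Invariant_Qpar]
    linear_combination 4 * h4
  refine ⟨hformula, ?_⟩
  change lensL31Invariant (Qpar a b c d f y) = 2
  rw [hformula]
  linear_combination 4 * h10 - 2 * h9

theorem lens_space_L31_invariant
    (a b c d f y : ℂ)
    (h1 : a * (c - d) = 0) (h2 : b * (c - d) = 0)
    (h3 : (c - 1) * (c - d) = 0) (h4 : d * (c - d) = 0)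
    (h5 : f * (c - d) = 0) (h6 : y * (c - d) = 0)
    (h7 : a * d - b * f = 0) (h8 : a * y - b * c = 0)
    (h9 : d ^ 2 - f * y = 0)
    (h10 : 2 * a * b + 2 * d ^ 2 - d = 0)
    (h11 : 2 * a ^ 2 + 2 * d * f - f = 0)
    (h12 : 2 * b ^ 2 + 2 * d * y - y = 0) :
    (∑ i : Fin 2, ∑ j : Fin 2, ∑ k : Fin 2, ∑ t : Fin 2,
        Qpar a b c d f y i j k t * Qpar a b c d f y k t j i) =
      8 * a * b + 6 * d ^ 2 - 4 * d + 2 * f * y + 2 ∧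
    (∑ i : Fin 2, ∑ j : Fin 2, ∑ k : Fin 2, ∑ t : Fin 2,
        Qpar a b c d f y i j k t * Qpar a b c d f y k t j i) = 2 :=
  lens_space_L31_invariant_general a b c d f y h4 h9 h10
end

section
/- There exist complex numbers a,b,c,d,f,y satisfying the pentagon system such that the L(3,1)-invariant 8ab + 6d² − 4d + 2fy + 2 and the L(4,1)-invariant 2 − 2d + f + y differ. Concretely, taking d ≠ 0 and α ∉ {1, −1} with f = αd, y = d/α, c = d, a = αb, 2αb² = d/2 − d² gives L(3,1)-invariant 2 and L(4,1)-invariant 2 + (√α − 1/√α)² d ≠ 2. -/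
/-!
On the component `c = d` of the pentagon system, the solutions with `a = α b`, `f = α d`,
`y = d / α` are exactly those with `2 α b² = d - 2 d²`. Along this family the `L(3,1)`-invariant
is identically `2`, while the `L(4,1)`-invariant is `2 + d (α - 1)² / α`, which differs from `2`
as soon as `d ≠ 0` and `α ≠ 1`; e.g. `α = 2`, `d = 1/3`, `b = 1/6`.
-/

section LensInvariants

variable {K : Type*} [Field K]

def PentagonSystem (a b c d f y : K) : Prop :=
  a * (c - d) = 0 ∧ b * (c - d) = 0 ∧ (c - 1) * (c - d) = 0 ∧
  d * (c - d) = 0 ∧ f * (c - d) = 0 ∧ y * (c - d) = 0 ∧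
  a * d - b * f = 0 ∧ a * y - b * c = 0 ∧ d ^ 2 - f * y = 0 ∧
  2 * a * b + 2 * d ^ 2 - d = 0 ∧ 2 * a ^ 2 + 2 * d * f - f = 0 ∧
  2 * b ^ 2 + 2 * d * y - y = 0

def lens31Invariant (a b d f y : K) : K :=
  8 * a * b + 6 * d ^ 2 - 4 * d + 2 * f * y + 2

def lens41Invariant (d f y : K) : K :=
  2 - 2 * d + f + y

variable {α b d : K}

theorem pentagonSystem_of_two_mul_sq_eq (hα : α ≠ 0) (hb : 2 * α * b ^ 2 = d - 2 * d ^ 2) :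
    PentagonSystem (α * b) b d d (α * d) (d / α) := by
  simp only [PentagonSystem, sub_self, mul_zero, true_and]
  field_simp
  refine ⟨by ring, by ring, by ring, by linear_combination hb, ?_, ?_⟩
  · linear_combination α * hb
  · linear_combination hb

theorem lens31Invariant_eq_two (hα : α ≠ 0) (hb : 2 * α * b ^ 2 = d - 2 * d ^ 2) :
    lens31Invariant (α * b) b d (α * d) (d / α) = 2 := by
  unfold lens31Invariant
  field_simp
  linear_combination 4 * hb

theorem lens41Invariant_eq (hα : α ≠ 0) :
    lens41Invariant d (α * d) (d / α) = 2 + d * (α - 1) ^ 2 / α := by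
  unfold lens41Invariant
  field_simp
  ring

theorem lens41Invariant_ne_two (hα : α ≠ 0) (hα₁ : α ≠ 1) (hd : d ≠ 0) :
    lens41Invariant d (α * d) (d / α) ≠ 2 := by
  rw [lens41Invariant_eq hα, Ne, add_eq_left]
  exact div_ne_zero (mul_ne_zero hd (pow_ne_zero 2 (sub_ne_zero.mpr hα₁))) hα

end LensInvariants

theorem invariants_distinguish_L31_L41 :
    ∃ a b c d f y : ℂ,
      (a * (c - d) = 0 ∧ b * (c - d) = 0 ∧ (c - 1) * (c - d) = 0 ∧
       d * (c - d) = 0 ∧ f * (c - d) = 0 ∧ y * (c - d) = 0 ∧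
       a * d - b * f = 0 ∧ a * y - b * c = 0 ∧ d ^ 2 - f * y = 0 ∧
       2 * a * b + 2 * d ^ 2 - d = 0 ∧ 2 * a ^ 2 + 2 * d * f - f = 0 ∧
       2 * b ^ 2 + 2 * d * y - y = 0) ∧
      8 * a * b + 6 * d ^ 2 - 4 * d + 2 * f * y + 2 = 2 ∧
      2 - 2 * d + f + y ≠ 2 := by
  have hα : (2 : ℂ) ≠ 0 := two_ne_zero
  have hb : 2 * 2 * (1 / 6 : ℂ) ^ 2 = 1 / 3 - 2 * (1 / 3) ^ 2 := by norm_num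
  exact ⟨_, _, _, _, _, _, pentagonSystem_of_two_mul_sq_eq hα hb, lens31Invariant_eq_two hα hb,
    lens41Invariant_ne_two hα (by norm_num) (by norm_num)⟩
end

section
/- Suppose a,b,c,d,f,y ∈ ℂ satisfy the full pentagon system (twelve equations as in the paper) with d ≠ 0 and f ≠ 0. Then setting α := f/d, we have y = d/α, c = d, b² = (d/(2α) − d²/α), and a = αb or a = −αb with matching signs, i.e., every solution with d, f ≠ 0 lies in the two-parameter family described in the paper. -/
section Field

variable {K : Type*} [Field K]

theorem eq_div_div_of_sq_sub_mul_eq_zero {d f y : K} (hf : f ≠ 0) (h : d ^ 2 - f * y = 0) :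
    y = d / (f / d) := by
  rw [div_div_eq_mul_div, eq_div_iff hf]
  linear_combination -h

theorem eq_div_mul_of_mul_sub_mul_eq_zero {a b d f : K} (hd : d ≠ 0) (h : a * d - b * f = 0) :
    a = f / d * b := by
  field_simp
  linear_combination h

theorem sq_eq_of_sq_sub_mul_eq_zero_of_two_mul_sq_add_eq_zero [NeZero (2 : K)] {b d f y : K}
    (hf : f ≠ 0) (h : d ^ 2 - f * y = 0) (h' : 2 * b ^ 2 + 2 * d * y - y = 0) :
    b ^ 2 = d / (2 * (f / d)) - d ^ 2 / (f / d) := by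
  field_simp
  linear_combination f * h' - (1 - 2 * d) * h

end Field

theorem pentagon_system_classification_general
    (a b c d f y : ℂ)
    (h4 : d * (c - d) = 0)
    (h7 : a * d - b * f = 0)
    (h9 : d ^ 2 - f * y = 0)
    (h12 : 2 * b ^ 2 + 2 * d * y - y = 0)
    (hd : d ≠ 0) (hf : f ≠ 0) :
    let α := f / d
    y = d / α ∧ c = d ∧ b ^ 2 = d / (2 * α) - d ^ 2 / α ∧
    (a = α * b ∨ a = -(α * b)) :=
  ⟨eq_div_div_of_sq_sub_mul_eq_zero hf h9,
    sub_eq_zero.mp ((mul_eq_zero.mp h4).resolve_left hd),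
    sq_eq_of_sq_sub_mul_eq_zero_of_two_mul_sq_add_eq_zero hf h9 h12,
    Or.inl (eq_div_mul_of_mul_sub_mul_eq_zero hd h7)⟩

theorem pentagon_system_classification
    (a b c d f y : ℂ)
    (h1 : a * (c - d) = 0) (h2 : b * (c - d) = 0)
    (h3 : (c - 1) * (c - d) = 0) (h4 : d * (c - d) = 0)
    (h5 : f * (c - d) = 0) (h6 : y * (c - d) = 0)
    (h7 : a * d - b * f = 0) (h8 : a * y - b * c = 0)
    (h9 : d ^ 2 - f * y = 0)
    (h10 : 2 * a * b + 2 * d ^ 2 - d = 0)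
    (h11 : 2 * a ^ 2 + 2 * d * f - f = 0)
    (h12 : 2 * b ^ 2 + 2 * d * y - y = 0)
    (hd : d ≠ 0) (hf : f ≠ 0) :
    let α := f / d
    y = d / α ∧ c = d ∧ b ^ 2 = d / (2 * α) - d ^ 2 / α ∧
    (a = α * b ∨ a = -(α * b)) :=
  pentagon_system_classification_general a b c d f y h4 h7 h9 h12 hd hf
end
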